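/- arXiv:2501.17383 — 3 statements merged into one kernel-verified Lean document; each statement's English description precedes it below -/
import Mathlib

section
/- If a monomial ideal J in the polynomial ring k[x_1,...,x_n] is weakly reverse lexicographic (i.e., for every monomial m among the minimal generators of J, every monomial m' with deg(m') = deg(m) and m' greater than or equal to m in the degree reverse lexicographic order also lies in J), then J is Borel-fixed, i.e., for all i < j, if a minimal generator m of J is divisible by x_j^t but not x_j^{t+1}, then (x_i/x_j)^s · m ∈ J for all s with binom(t,s) nonzero mod char(k). -/
open MvPolynomial

def degOf {n : ℕ} (e : Fin n →₀ ℕ) : ℕ := ∑ i, e i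

def IsMonomialIdeal {n : ℕ} {k : Type*} [Field k] (J : Ideal (MvPolynomial (Fin n) k)) : Prop :=
  ∃ E : Set (Fin n →₀ ℕ), J = Ideal.span ((fun e => (monomial e (1 : k))) '' E)

def MinGen {n : ℕ} {k : Type*} [Field k] (J : Ideal (MvPolynomial (Fin n) k))
    (e : Fin n →₀ ℕ) : Prop :=
  monomial e (1 : k) ∈ J ∧ ∀ e' : Fin n →₀ ℕ, e' ≤ e → e' ≠ e → monomial e' (1 : k) ∉ J

/-- `a ⪯ b` in the lexicographic order (`x_1 > x_2 > ⋯ > x_n`). -/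
def lexLE {n : ℕ} (a b : Fin n →₀ ℕ) : Prop :=
  a = b ∨ ∃ i : Fin n, a i < b i ∧ ∀ j : Fin n, j < i → a j = b j

def lexLT {n : ℕ} (a b : Fin n →₀ ℕ) : Prop :=
  ∃ i : Fin n, a i < b i ∧ ∀ j : Fin n, j < i → a j = b j

/-- `a ⪯ b` in the degree reverse lexicographic order (`x_1 > x_2 > ⋯ > x_n`). -/
def drlLE {n : ℕ} (a b : Fin n →₀ ℕ) : Prop :=
  a = b ∨ degOf a < degOf b ∨
    (degOf a = degOf b ∧ ∃ i : Fin n, b i < a i ∧ ∀ j : Fin n, i < j → a j = b j)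

def IsLeadExp {n : ℕ} {k : Type*} [Field k] (le : (Fin n →₀ ℕ) → (Fin n →₀ ℕ) → Prop)
    (f : MvPolynomial (Fin n) k) (e : Fin n →₀ ℕ) : Prop :=
  e ∈ f.support ∧ ∀ e' ∈ f.support, le e' e

noncomputable def initialIdeal {n : ℕ} {k : Type*} [Field k] (le : (Fin n →₀ ℕ) → (Fin n →₀ ℕ) → Prop)
    (I : Ideal (MvPolynomial (Fin n) k)) : Ideal (MvPolynomial (Fin n) k) :=
  Ideal.span {p | ∃ f ∈ I, ∃ e, IsLeadExp le f e ∧ p = monomial e (1 : k)}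

noncomputable def HF {n : ℕ} {k : Type*} [Field k]
    (I : Ideal (MvPolynomial (Fin n) k)) (d : ℕ) : ℕ :=
  Module.finrank k
    ((homogeneousSubmodule (Fin n) k d) ⧸
      (Submodule.comap (homogeneousSubmodule (Fin n) k d).subtype
        (Submodule.restrictScalars k I)))

def IsLexsegment {n : ℕ} {k : Type*} [Field k] (J : Ideal (MvPolynomial (Fin n) k)) : Prop :=
  ∀ e : Fin n →₀ ℕ, monomial e (1 : k) ∈ J →
    ∀ e' : Fin n →₀ ℕ, degOf e' = degOf e → lexLE e e' → monomial e' (1 : k) ∈ J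

def IsHomogIdeal {n : ℕ} {k : Type*} [Field k] (I : Ideal (MvPolynomial (Fin n) k)) : Prop :=
  ∃ G : Set (MvPolynomial (Fin n) k), (∀ f ∈ G, ∃ d, f.IsHomogeneous d) ∧ I = Ideal.span G

noncomputable def matAction {n : ℕ} {k : Type*} [Field k] (α : Matrix (Fin n) (Fin n) k) :
    MvPolynomial (Fin n) k →ₐ[k] MvPolynomial (Fin n) k :=
  MvPolynomial.aeval (fun j => ∑ i, α i j • MvPolynomial.X i)

def BorelFixed {n : ℕ} {k : Type*} [Field k] (J : Ideal (MvPolynomial (Fin n) k)) : Prop :=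
  ∀ α : Matrix (Fin n) (Fin n) k, IsUnit α.det → (∀ i j : Fin n, j < i → α i j = 0) →
    Ideal.map (matAction α) J = J


lemma degOf_add {n : ℕ} (a b : Fin n →₀ ℕ) : degOf (a + b) = degOf a + degOf b := by
  simp only [degOf, Finsupp.add_apply, Finset.sum_add_distrib]

lemma degOf_single {n : ℕ} (i : Fin n) (s : ℕ) : degOf (Finsupp.single i s) = s := by
  simp [degOf, Finsupp.single_apply]

section Shift

variable {n : ℕ} {e : Fin n →₀ ℕ} {i j : Fin n} {s : ℕ}

lemma single_le_add_single (hs : s ≤ e j) :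
    Finsupp.single j s ≤ e + Finsupp.single i s := by
  intro l
  by_cases hl : l = j
  · subst hl
    simp only [Finsupp.coe_add, Pi.add_apply, Finsupp.single_eq_same]
    omega
  · simp [Finsupp.single_apply, Ne.symm hl]

lemma degOf_add_single_tsub_single (hs : s ≤ e j) :
    degOf (e + Finsupp.single i s - Finsupp.single j s) = degOf e := by
  have h := congrArg degOf (tsub_add_cancel_of_le (single_le_add_single (i := i) hs))
  rw [degOf_add, degOf_add, degOf_single, degOf_single] at h
  omega

/-- The last coordinate that changes is `j`, where the exponent drops. -/
lemma drlLE_add_single_tsub_single (hij : i < j) (hs : s ≤ e j) :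
    drlLE e (e + Finsupp.single i s - Finsupp.single j s) := by
  rcases Nat.eq_zero_or_pos s with rfl | hspos
  · left
    simp
  refine Or.inr (Or.inr ⟨(degOf_add_single_tsub_single hs).symm, j, ?_, fun l hjl => ?_⟩)
  · simp only [Finsupp.coe_tsub, Finsupp.coe_add, Pi.sub_apply, Pi.add_apply,
      Finsupp.single_eq_same, Finsupp.single_eq_of_ne hij.ne']
    omega
  · simp [(hij.trans hjl).ne, hjl.ne]

end Shift

theorem stmt0_general {n : ℕ} {k : Type*} [Field k] (J : Ideal (MvPolynomial (Fin n) k))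
    (hwrl : ∀ e : Fin n →₀ ℕ, MinGen J e →
      ∀ e' : Fin n →₀ ℕ, degOf e' = degOf e → drlLE e e' → monomial e' (1 : k) ∈ J) :
    ∀ i j : Fin n, i < j → ∀ e : Fin n →₀ ℕ, MinGen J e →
      ∀ s : ℕ, ((Nat.choose (e j) s : k) ≠ 0) →
        monomial (e + Finsupp.single i s - Finsupp.single j s) (1 : k) ∈ J := by
  intro i j hij e hmin s hchoose
  have hs : s ≤ e j := not_lt.mp fun h => hchoose (by simp [Nat.choose_eq_zero_of_lt h])
  exact hwrl e hmin _ (degOf_add_single_tsub_single hs) (drlLE_add_single_tsub_single hij hs)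

theorem stmt0 {n : ℕ} {k : Type*} [Field k] (J : Ideal (MvPolynomial (Fin n) k))
    (hmon : IsMonomialIdeal J)
    (hwrl : ∀ e : Fin n →₀ ℕ, MinGen J e →
      ∀ e' : Fin n →₀ ℕ, degOf e' = degOf e → drlLE e e' → monomial e' (1 : k) ∈ J) :
    ∀ i j : Fin n, i < j → ∀ e : Fin n →₀ ℕ, MinGen J e →
      ∀ s : ℕ, ((Nat.choose (e j) s : k) ≠ 0) →
        monomial (e + Finsupp.single i s - Finsupp.single j s) (1 : k) ∈ J :=
  stmt0_general J hwrl
end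

section
/- For any homogeneous ideal I in k[x_1,...,x_n] and any monomial order ⪯, the Hilbert series of S/I equals the Hilbert series of S/in_⪯(I), where in_⪯(I) is the initial ideal of I with respect to ⪯. -/
open MvPolynomial

/-! The dimension of a finite-dimensional space of polynomials equals the number of distinct
leading exponents of its elements: elements with distinct leading exponents are linearly
independent, and reading off the coefficients at those exponents is injective.
For a homogeneous ideal `I`, the leading exponents of `I_d` are the leading exponents of `I` of
degree `d`. Since the leading exponents of `I` form an upward-closed set, `in(I)` is the monomial
ideal on that set, whose leading exponents are the same set; so `I_d` and `in(I)_d` have the same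
dimension, hence so do the degree-`d` parts of `S/I` and `S/in(I)`. -/

attribute [local instance] MvPolynomial.gradedAlgebra

namespace MonomialOrder

variable {σ R k : Type*} (m : MonomialOrder σ)

def leadingExponents [CommSemiring R] (s : Set (MvPolynomial σ R)) : Set (σ →₀ ℕ) :=
  m.degree '' (s \ {0})

section CommSemiring

variable [CommSemiring R] {m}

lemma mem_leadingExponents {s : Set (MvPolynomial σ R)} {e : σ →₀ ℕ} :
    e ∈ m.leadingExponents s ↔ ∃ f ∈ s, f ≠ 0 ∧ m.degree f = e := by
  simp [leadingExponents, and_assoc]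

lemma degree_eq_of_support_subset {f g : MvPolynomial σ R} (hgf : g.support ⊆ f.support)
    (hf : m.degree f ∈ g.support) : m.degree g = m.degree f :=
  m.toSyn.injective (le_antisymm (m.degree_le_degree_of_support_subset hgf) (m.le_degree hf))

lemma degree_mem_support_homogeneousComponent {f : MvPolynomial σ R} (hf : f ≠ 0) :
    m.degree f ∈ (homogeneousComponent (m.degree f).degree f).support := by
  rw [mem_support_iff, coeff_homogeneousComponent, if_pos rfl]
  exact m.coeff_degree_ne_zero_iff.mpr hf

lemma degree_homogeneousComponent {f : MvPolynomial σ R} (hf : f ≠ 0) :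
    m.degree (homogeneousComponent (m.degree f).degree f) = m.degree f := by
  refine degree_eq_of_support_subset (fun e he ↦ ?_) (degree_mem_support_homogeneousComponent hf)
  rw [mem_support_iff, coeff_homogeneousComponent] at he
  exact mem_support_iff.mpr fun h ↦ he (by simp [h])

lemma degree_degree_of_isHomogeneous {f : MvPolynomial σ R} {d : ℕ} (hf : f.IsHomogeneous d)
    (hf0 : f ≠ 0) : (m.degree f).degree = d := by
  rw [Finsupp.degree_eq_weight_one]
  exact hf (m.coeff_degree_ne_zero_iff.mpr hf0)

lemma leadingExponents_inter_isHomogeneous {J : Ideal (MvPolynomial σ R)}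
    (hJ : J.IsHomogeneous (homogeneousSubmodule σ R)) (d : ℕ) :
    m.leadingExponents ((J : Set (MvPolynomial σ R)) ∩ {f | f.IsHomogeneous d}) =
      {e ∈ m.leadingExponents (J : Set (MvPolynomial σ R)) | e.degree = d} := by
  ext e
  simp only [mem_leadingExponents, Set.mem_inter_iff, Set.mem_ofPred_eq]
  constructor
  · rintro ⟨f, ⟨hfJ, hfd⟩, hf0, rfl⟩
    exact ⟨⟨f, hfJ, hf0, rfl⟩, degree_degree_of_isHomogeneous hfd hf0⟩
  · rintro ⟨⟨f, hfJ, hf0, rfl⟩, rfl⟩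
    exact ⟨_, ⟨homogeneousComponent_mem_of_mem hJ hfJ _, homogeneousComponent_isHomogeneous _ _⟩,
      support_nonempty.mp ⟨_, degree_mem_support_homogeneousComponent hf0⟩,
      degree_homogeneousComponent hf0⟩

lemma leadingExponents_span_monomial [Nontrivial R] {E : Set (σ →₀ ℕ)} (hE : IsUpperSet E) :
    m.leadingExponents (Ideal.span ((fun e ↦ monomial e (1 : R)) '' E) : Set (MvPolynomial σ R)) =
      E := by
  ext e
  rw [mem_leadingExponents]
  constructor
  · rintro ⟨f, hf, hf0, rfl⟩
    obtain ⟨e', he', hle⟩ := mem_ideal_span_monomial_image.mp hf _ (m.degree_mem_support hf0)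
    exact hE hle he'
  · intro he
    refine ⟨monomial e 1, Ideal.subset_span ⟨e, he, rfl⟩, by simp, ?_⟩
    classical
    rw [degree_monomial, if_neg one_ne_zero]

lemma isUpperSet_leadingExponents [Nontrivial R] (I : Ideal (MvPolynomial σ R)) :
    IsUpperSet (m.leadingExponents (I : Set (MvPolynomial σ R))) := by
  classical
  intro e b hle he
  obtain ⟨f, hf, hf0, rfl⟩ := mem_leadingExponents.mp he
  obtain ⟨a, rfl⟩ := exists_add_of_le hle
  have hcoeff : coeff (a + m.degree f) (monomial a 1 * f) ≠ 0 := by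
    rw [coeff_monomial_mul, one_mul]
    exact m.coeff_degree_ne_zero_iff.mpr hf0
  refine mem_leadingExponents.mpr
    ⟨_, I.mul_mem_left (monomial a 1) hf, fun h ↦ hcoeff (by simp [h]), ?_⟩
  rw [degree_mul_of_isRegular_left (by simpa using isRegular_one) hf0, degree_monomial,
    if_neg one_ne_zero, add_comm]

lemma isHomogeneous_span_monomial (E : Set (σ →₀ ℕ)) :
    (Ideal.span ((fun e ↦ monomial e (1 : R)) '' E)).IsHomogeneous (homogeneousSubmodule σ R) :=
  Ideal.homogeneous_span _ _ <| by
    rintro _ ⟨e, -, rfl⟩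
    exact ⟨_, isHomogeneous_monomial _ rfl⟩

end CommSemiring

section Field

variable [Field k] {m}

theorem linearIndependent_of_injective_degree {ι : Type*} {g : ι → MvPolynomial σ k}
    (hg : ∀ i, g i ≠ 0) (hinj : Function.Injective (m.degree ∘ g)) : LinearIndependent k g := by
  classical
  rw [linearIndependent_iff']
  intro s c hsum i hi
  by_contra hci
  obtain ⟨i₀, hi₀, hmax⟩ := (s.filter (c · ≠ 0)).exists_max_image (m.toSyn ∘ m.degree ∘ g)
    ⟨i, Finset.mem_filter.mpr ⟨hi, hci⟩⟩
  rw [Finset.mem_filter] at hi₀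
  -- at the top degree among the terms with nonzero coefficient only `g i₀` contributes
  have hcoeff := congrArg (coeff (m.degree (g i₀))) hsum
  rw [coeff_sum, Finset.sum_eq_single i₀, coeff_zero, coeff_smul, smul_eq_mul] at hcoeff
  · exact mul_ne_zero hi₀.2 (m.coeff_degree_ne_zero_iff.mpr (hg i₀)) hcoeff
  · intro j hj hji
    by_cases hcj : c j = 0
    · simp [hcj]
    have hlt : m.degree (g j) ≺[m] m.degree (g i₀) :=
      lt_of_le_of_ne (hmax j (Finset.mem_filter.mpr ⟨hj, hcj⟩))
        fun h ↦ hji (hinj (m.toSyn.injective h))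
    rw [coeff_smul, m.coeff_eq_zero_of_lt hlt, smul_zero]
  · exact fun h ↦ absurd hi₀.1 h

theorem finrank_eq_ncard_leadingExponents (M : Submodule k (MvPolynomial σ k))
    (hM : (m.leadingExponents (M : Set (MvPolynomial σ k))).Finite) :
    Module.finrank k M = (m.leadingExponents (M : Set (MvPolynomial σ k))).ncard := by
  set L := hM.toFinset
  rw [Set.ncard_eq_toFinset_card _ hM]
  let coeffs : M →ₗ[k] (L → k) := LinearMap.pi fun e ↦ (lcoeff k (e : σ →₀ ℕ)).comp M.subtype
  have hcoeffs : Function.Injective coeffs := by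
    rw [← LinearMap.ker_eq_bot, Submodule.eq_bot_iff]
    intro f hf
    by_contra hf0
    have hdeg : m.degree (f : MvPolynomial σ k) ∈ L :=
      hM.mem_toFinset.mpr (mem_leadingExponents.mpr ⟨f, f.2, by simpa using hf0, rfl⟩)
    exact m.coeff_degree_ne_zero_iff.mpr (by simpa using hf0) (congrFun hf ⟨_, hdeg⟩)
  have := Module.Finite.of_injective coeffs hcoeffs
  refine le_antisymm ?_ ?_
  · simpa using LinearMap.finrank_le_finrank_of_injective hcoeffs
  · have hex (e : L) : ∃ f ∈ M, f ≠ 0 ∧ m.degree f = e :=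
      mem_leadingExponents.mp (hM.mem_toFinset.mp e.2)
    choose g hgM hg0 hgdeg using hex
    have hli : LinearIndependent k (M.subtype ∘ fun e ↦ (⟨g e, hgM e⟩ : M)) :=
      linearIndependent_of_injective_degree (m := m) hg0 fun e e' h ↦ Subtype.ext <| by
        simpa [hgdeg] using h
    simpa using hli.of_comp.fintype_card_le_finrank

theorem finrank_inf_homogeneousSubmodule [Finite σ] {J : Ideal (MvPolynomial σ k)}
    (hJ : J.IsHomogeneous (homogeneousSubmodule σ k)) (d : ℕ) :
    Module.finrank k ↥(J.restrictScalars k ⊓ homogeneousSubmodule σ k d) =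
      {e ∈ m.leadingExponents (J : Set (MvPolynomial σ k)) | e.degree = d}.ncard := by
  have hexps : m.leadingExponents ((J.restrictScalars k ⊓ homogeneousSubmodule σ k d :
      Submodule k _) : Set (MvPolynomial σ k)) =
      {e ∈ m.leadingExponents (J : Set (MvPolynomial σ k)) | e.degree = d} :=
    leadingExponents_inter_isHomogeneous hJ d
  rw [finrank_eq_ncard_leadingExponents, hexps]
  exact hexps ▸ (Finsupp.finite_of_degree_eq d).subset fun _ he ↦ he.2

end Field

end MonomialOrder

section InitialIdeal

variable {n : ℕ} {k : Type*} [Field k] (m : MonomialOrder (Fin n))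

lemma isLeadExp_iff {f : MvPolynomial (Fin n) k} {e : Fin n →₀ ℕ} :
    IsLeadExp (fun a b ↦ m.toSyn a ≤ m.toSyn b) f e ↔ f ≠ 0 ∧ m.degree f = e := by
  constructor
  · rintro ⟨he, hmax⟩
    have hf0 : f ≠ 0 := support_nonempty.mp ⟨e, he⟩
    exact ⟨hf0,
      m.toSyn.injective (le_antisymm (hmax _ (m.degree_mem_support hf0)) (m.le_degree he))⟩
  · rintro ⟨hf0, rfl⟩
    exact ⟨m.degree_mem_support hf0, fun _ ↦ m.le_degree⟩

lemma initialIdeal_eq_span_monomial (I : Ideal (MvPolynomial (Fin n) k)) :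
    initialIdeal (fun a b ↦ m.toSyn a ≤ m.toSyn b) I =
      Ideal.span ((fun e ↦ monomial e (1 : k)) ''
        m.leadingExponents (I : Set (MvPolynomial (Fin n) k))) := by
  unfold initialIdeal
  congr 1
  ext p
  simp only [isLeadExp_iff, MonomialOrder.mem_leadingExponents, Set.mem_image, Set.mem_ofPred_eq]
  aesop

lemma leadingExponents_initialIdeal (I : Ideal (MvPolynomial (Fin n) k)) :
    m.leadingExponents
      (initialIdeal (fun a b ↦ m.toSyn a ≤ m.toSyn b) I : Set (MvPolynomial (Fin n) k)) =
      m.leadingExponents (I : Set (MvPolynomial (Fin n) k)) := by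
  rw [initialIdeal_eq_span_monomial, MonomialOrder.leadingExponents_span_monomial
    (MonomialOrder.isUpperSet_leadingExponents I)]

lemma isHomogeneous_initialIdeal (I : Ideal (MvPolynomial (Fin n) k)) :
    (initialIdeal (fun a b ↦ m.toSyn a ≤ m.toSyn b) I).IsHomogeneous
      (homogeneousSubmodule (Fin n) k) := by
  rw [initialIdeal_eq_span_monomial]
  exact MonomialOrder.isHomogeneous_span_monomial _

end InitialIdeal

lemma IsHomogIdeal.isHomogeneous {n : ℕ} {k : Type*} [Field k]
    {I : Ideal (MvPolynomial (Fin n) k)} (hI : IsHomogIdeal I) :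
    I.IsHomogeneous (homogeneousSubmodule (Fin n) k) := by
  obtain ⟨G, hG, rfl⟩ := hI
  exact Ideal.homogeneous_span _ _ hG

lemma HF_add_finrank_inf {n : ℕ} {k : Type*} [Field k] (J : Ideal (MvPolynomial (Fin n) k))
    (d : ℕ) :
    HF J d + Module.finrank k ↥(J.restrictScalars k ⊓ homogeneousSubmodule (Fin n) k d) =
      Module.finrank k (homogeneousSubmodule (Fin n) k d) := by
  set V := homogeneousSubmodule (Fin n) k d
  have : Module.Finite k V := Module.Finite.iff_fg.mpr (homogeneousSubmodule_fg _ _ d)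
  rw [← (Submodule.comapSubtypeEquivOfLe (inf_le_right : J.restrictScalars k ⊓ V ≤ V)).finrank_eq,
    Submodule.comap_inf, Submodule.comap_subtype_self, inf_top_eq]
  exact Submodule.finrank_quotient_add_finrank _

theorem stmt2 {n : ℕ} {k : Type*} [Field k] (m : MonomialOrder (Fin n))
    (I : Ideal (MvPolynomial (Fin n) k)) (hI : IsHomogIdeal I) (d : ℕ) :
    HF I d = HF (initialIdeal (fun a b => m.toSyn a ≤ m.toSyn b) I) d := by
  have hHF := HF_add_finrank_inf I d
  have hHF_in := HF_add_finrank_inf (initialIdeal (fun a b => m.toSyn a ≤ m.toSyn b) I) d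
  rw [m.finrank_inf_homogeneousSubmodule hI.isHomogeneous] at hHF
  rw [m.finrank_inf_homogeneousSubmodule (isHomogeneous_initialIdeal m I),
    leadingExponents_initialIdeal] at hHF_in
  omega
end

section
/- Fix n, s, d_1,...,d_s and an infinite field k, and let V ⊆ A^N be the Zariski open dense set on which in_lex(I_a) is a constant monomial ideal J. If there exists a point a in the generic-Hilbert-series set U such that in_lex(I_a) is a lexsegment ideal, then J itself is a lexsegment ideal. -/
open MvPolynomial

def Idx (n s : ℕ) (d : Fin s → ℕ) : Type := (i : Fin s) × {e : Fin n →₀ ℕ // degOf e = d i}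

def CoeffCond {n s : ℕ} {k : Type*} [Field k] (d : Fin s → ℕ) (a : Idx n s d → k)
    (f : Fin s → MvPolynomial (Fin n) k) : Prop :=
  ∀ i : Fin s,
    (∀ e : {e : Fin n →₀ ℕ // degOf e = d i}, MvPolynomial.coeff e.1 (f i) = a ⟨i, e⟩) ∧
    ∀ e : Fin n →₀ ℕ, degOf e ≠ d i → MvPolynomial.coeff e (f i) = 0


/-!
Fix a degree `m` and let `L` be the set of degree-`m` exponents of `in_lex(I_a)`. Each `v ∈ L` is the
leading exponent of an element of `(I_a)_m`; written as combinations of the generic forms, these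
elements give a square matrix of polynomials in the coefficients which is triangular and invertible
at `a`. Its determinant `G` is therefore nonzero, and wherever `G` does not vanish the coefficient
map `(I_c)_m → k^L` is onto. As the Hilbert function at `a` is minimal,
`dim (I_c)_m ≤ dim (I_a)_m ≤ |L|`, so the map is bijective. When `L` is a lex-segment, bijectivity
forces the degree-`m` exponents of `J = in_lex(I_c)` to be exactly `L`.
-/

open MonomialOrder

attribute [local instance] MvPolynomial.gradedAlgebra

section MonomialOrder

variable {σ k : Type*} [Field k]

theorem degree_eq_of_mem_support_of_mem_homogeneousSubmodule {m : ℕ} {z : MvPolynomial σ k}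
    (hz : z ∈ homogeneousSubmodule σ k m) {e : σ →₀ ℕ} (he : e ∈ z.support) : e.degree = m := by
  rw [Finsupp.degree_eq_weight_one]
  exact hz (mem_support_iff.1 he)

theorem MonomialOrder.degree_homogeneousComponent_s19 (ord : MonomialOrder σ) (f : MvPolynomial σ k) :
    ord.degree (homogeneousComponent (ord.degree f).degree f) = ord.degree f := by
  rcases eq_or_ne f 0 with rfl | hf
  · simp
  have hmem : ord.degree f ∈ (homogeneousComponent (ord.degree f).degree f).support := by
    rw [mem_support_iff, coeff_homogeneousComponent, if_pos rfl]
    exact ord.coeff_degree_ne_zero_iff.2 hf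
  refine ord.toSyn.injective (le_antisymm (ord.degree_le_iff.2 fun c hc => ?_) (ord.le_degree hmem))
  rw [mem_support_iff, coeff_homogeneousComponent] at hc
  exact ord.le_degree (mem_support_iff.2 fun h => hc (by simp [h]))

noncomputable def coeffsOn (L : Finset (σ →₀ ℕ)) : MvPolynomial σ k →ₗ[k] (L → k) :=
  LinearMap.pi fun w => lcoeff k w.1

@[simp]
theorem coeffsOn_apply (L : Finset (σ →₀ ℕ)) (p : MvPolynomial σ k) (w : L) :
    coeffsOn L p w = coeff w.1 p :=
  rfl

theorem det_coeff_ne_zero_of_degree_eq [DecidableEq σ] (ord : MonomialOrder σ) {L : Finset (σ →₀ ℕ)}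
    (p : L → MvPolynomial σ k) (hp0 : ∀ v, p v ≠ 0) (hp : ∀ v, ord.degree (p v) = v) :
    (Matrix.of fun v w : L => coeff w.1 (p v)).det ≠ 0 := by
  let : LinearOrder L :=
    LinearOrder.lift' (fun v => ord.toSyn v.1) (ord.toSyn.injective.comp Subtype.val_injective)
  rw [Matrix.det_of_isLowerTriangular _ fun v w hvw => ?_]
  · refine Finset.prod_ne_zero_iff.2 fun v _ => ?_
    simpa [hp v] using ord.coeff_degree_ne_zero_iff.2 (hp0 v)
  · exact ord.coeff_eq_zero_of_lt (by rw [hp v]; exact hvw)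

theorem surjective_coeffsOn_of_det_ne_zero [DecidableEq σ] {W : Submodule k (MvPolynomial σ k)}
    {L : Finset (σ →₀ ℕ)} (q : L → MvPolynomial σ k) (hq : ∀ v, q v ∈ W)
    (hdet : (Matrix.of fun v w : L => coeff w.1 (q v)).det ≠ 0) :
    Function.Surjective ((coeffsOn L).domRestrict W) := by
  intro y
  obtain ⟨x, rfl⟩ := Matrix.vecMul_surjective_iff_isUnit.2
    ((Matrix.isUnit_iff_isUnit_det _).2 hdet.isUnit) y
  refine ⟨⟨∑ v, x v • q v, W.sum_mem fun v _ => W.smul_mem _ (hq v)⟩, ?_⟩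
  ext w
  simp [Matrix.vecMul, dotProduct, coeff_sum]

theorem injective_coeffsOn (ord : MonomialOrder σ) {W : Submodule k (MvPolynomial σ k)}
    {L : Finset (σ →₀ ℕ)} (hW : ∀ z ∈ W, z ≠ 0 → ord.degree z ∈ L) :
    Function.Injective ((coeffsOn L).domRestrict W) := by
  rw [← LinearMap.ker_eq_bot, LinearMap.ker_eq_bot']
  rintro ⟨z, hz⟩ hρ
  by_contra hz0
  have hz0 : z ≠ 0 := fun h => hz0 (Subtype.ext h)
  exact ord.coeff_degree_ne_zero_iff.2 hz0 (congrFun hρ ⟨_, hW z hz hz0⟩)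

def IsDegreeUpperSet (ord : MonomialOrder σ) (m : ℕ) (L : Finset (σ →₀ ℕ)) : Prop :=
  ∀ v ∈ L, ∀ w : σ →₀ ℕ, w.degree = m → v ≼[ord] w → w ∈ L

section UpperSet

variable {ord : MonomialOrder σ} {m : ℕ} {W : Submodule k (MvPolynomial σ k)}
  {L : Finset (σ →₀ ℕ)}

theorem degree_mem_of_injective_coeffsOn (hW : W ≤ homogeneousSubmodule σ k m)
    (hL : IsDegreeUpperSet ord m L)
    (hinj : Function.Injective ((coeffsOn L).domRestrict W)) {z : MvPolynomial σ k}
    (hz : z ∈ W) (hz0 : z ≠ 0) : ord.degree z ∈ L := by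
  by_contra hzL
  refine hz0 (congrArg Subtype.val (@hinj ⟨z, hz⟩ 0 (funext fun w => ?_)))
  by_contra hw
  have hw : w.1 ∈ z.support := mem_support_iff.2 hw
  exact hzL (hL w w.2 _ (degree_eq_of_mem_support_of_mem_homogeneousSubmodule (hW hz)
    (ord.degree_mem_support hz0)) (ord.le_degree hw))

theorem exists_degree_eq_of_surjective_coeffsOn (hW : W ≤ homogeneousSubmodule σ k m)
    (hL : IsDegreeUpperSet ord m L)
    (hsurj : Function.Surjective ((coeffsOn L).domRestrict W)) {e : σ →₀ ℕ} (he : e ∈ L) :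
    ∃ z ∈ W, z ≠ 0 ∧ ord.degree z = e := by
  classical
  obtain ⟨⟨z, hz⟩, hze⟩ := hsurj (Pi.single ⟨e, he⟩ 1)
  have hcoeff : ∀ w : L, coeff w.1 z = (Pi.single ⟨e, he⟩ 1 : L → k) w := congrFun hze
  have hze : coeff e z = 1 := by simpa using hcoeff ⟨e, he⟩
  have hz0 : z ≠ 0 := by rintro rfl; simp at hze
  refine ⟨z, hz, hz0, ord.toSyn.injective (le_antisymm (not_lt.1 fun hlt => ?_)
    (ord.le_degree (by simp [hze])))⟩
  have hdL := hL e he _ (degree_eq_of_mem_support_of_mem_homogeneousSubmodule (hW hz)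
    (ord.degree_mem_support hz0)) hlt.le
  have := hcoeff ⟨_, hdL⟩
  rw [Pi.single_eq_of_ne fun h => hlt.ne (by rw [← Subtype.mk.inj h])] at this
  exact ord.coeff_degree_ne_zero_iff.2 hz0 this

end UpperSet

end MonomialOrder

section InitialIdeal

variable {n : ℕ} {k : Type*} [Field k]

theorem degOf_eq_degree (e : Fin n →₀ ℕ) : degOf e = e.degree :=
  (Finsupp.degree_eq_sum e).symm

theorem lexLE_iff {a b : Fin n →₀ ℕ} : lexLE a b ↔ a ≼[lex] b := by
  rw [MonomialOrder.lex_le_iff, le_iff_eq_or_lt, Finsupp.Lex.lt_iff, toLex_inj]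
  simp [lexLE, and_comm]

theorem isLeadExp_lexLE_iff {f : MvPolynomial (Fin n) k} {e : Fin n →₀ ℕ} :
    IsLeadExp lexLE f e ↔ f ≠ 0 ∧ lex.degree f = e := by
  simp only [IsLeadExp, lexLE_iff]
  constructor
  · rintro ⟨he, hmax⟩
    have hf : f ≠ 0 := by rintro rfl; simp at he
    exact ⟨hf, lex.toSyn.injective
      (le_antisymm (hmax _ (lex.degree_mem_support hf)) (lex.le_degree he))⟩
  · rintro ⟨hf, rfl⟩
    exact ⟨lex.degree_mem_support hf, fun _ => lex.le_degree⟩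

theorem monomial_mem_initialIdeal_iff {I : Ideal (MvPolynomial (Fin n) k)} {v : Fin n →₀ ℕ} :
    monomial v (1 : k) ∈ initialIdeal lexLE I ↔ ∃ f ∈ I, f ≠ 0 ∧ lex.degree f ≤ v := by
  have : initialIdeal lexLE I =
      Ideal.span ((fun e => monomial e (1 : k)) '' {e | ∃ f ∈ I, IsLeadExp lexLE f e}) := by
    rw [initialIdeal, Set.image]
    congr 1
    ext p
    grind
  simp [this, mem_ideal_span_monomial_image, isLeadExp_lexLE_iff, and_assoc]

theorem monomial_degree_mem_initialIdeal {I : Ideal (MvPolynomial (Fin n) k)}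
    {f : MvPolynomial (Fin n) k} (hf : f ∈ I) (hf0 : f ≠ 0) :
    monomial (lex.degree f) (1 : k) ∈ initialIdeal lexLE I :=
  Ideal.subset_span ⟨f, hf, _, isLeadExp_lexLE_iff.2 ⟨hf0, rfl⟩, rfl⟩

end InitialIdeal

section HomogeneousPart

variable {n : ℕ} {k : Type*} [Field k]

instance (m : ℕ) : Module.Finite k (homogeneousSubmodule (Fin n) k m) :=
  Module.Finite.iff_fg.2 (homogeneousSubmodule_fg _ _ m)

noncomputable def homogeneousPart (I : Ideal (MvPolynomial (Fin n) k)) (m : ℕ) :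
    Submodule k (MvPolynomial (Fin n) k) :=
  I.restrictScalars k ⊓ homogeneousSubmodule (Fin n) k m

instance (I : Ideal (MvPolynomial (Fin n) k)) (m : ℕ) : Module.Finite k (homogeneousPart I m) :=
  Submodule.finiteDimensional_of_le inf_le_right

theorem HF_add_finrank_homogeneousPart (I : Ideal (MvPolynomial (Fin n) k)) (m : ℕ) :
    HF I m + Module.finrank k (homogeneousPart I m) =
      Module.finrank k (homogeneousSubmodule (Fin n) k m) := by
  set H := homogeneousSubmodule (Fin n) k m
  have hcomap : (I.restrictScalars k).comap H.subtype = (homogeneousPart I m).comap H.subtype := by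
    rw [homogeneousPart, Submodule.comap_inf, Submodule.comap_subtype_self, inf_top_eq]
  rw [← (Submodule.comapSubtypeEquivOfLe (p := homogeneousPart I m) (q := H)
    inf_le_right).finrank_eq, ← hcomap]
  exact Submodule.finrank_quotient_add_finrank _

theorem finrank_homogeneousPart_le_of_HF_le {I I' : Ideal (MvPolynomial (Fin n) k)} {m : ℕ}
    (h : HF I m ≤ HF I' m) :
    Module.finrank k (homogeneousPart I' m) ≤ Module.finrank k (homogeneousPart I m) := by
  have := HF_add_finrank_homogeneousPart I m
  have := HF_add_finrank_homogeneousPart I' m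
  omega

theorem isHomogeneous_span_range {ι : Type*} {d : ι → ℕ} {g : ι → MvPolynomial (Fin n) k}
    (hg : ∀ i, g i ∈ homogeneousSubmodule (Fin n) k (d i)) :
    (Ideal.span (Set.range g)).IsHomogeneous (homogeneousSubmodule (Fin n) k) :=
  Ideal.homogeneous_span _ _ (by rintro _ ⟨i, rfl⟩; exact ⟨d i, hg i⟩)

theorem exists_mem_homogeneousPart_degree_eq {I : Ideal (MvPolynomial (Fin n) k)}
    (hI : I.IsHomogeneous (homogeneousSubmodule (Fin n) k)) {v : Fin n →₀ ℕ}
    (hv : monomial v (1 : k) ∈ initialIdeal lexLE I) :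
    ∃ p ∈ homogeneousPart I v.degree, p ≠ 0 ∧ lex.degree p = v := by
  obtain ⟨f, hfI, hf0, hfv⟩ := monomial_mem_initialIdeal_iff.1 hv
  set g := homogeneousComponent (lex.degree f).degree f
  have hg : lex.degree g = lex.degree f := lex.degree_homogeneousComponent_s19 f
  have hg0 : g ≠ 0 := by
    rw [← lex.coeff_degree_ne_zero_iff, hg, coeff_homogeneousComponent, if_pos rfl]
    exact lex.coeff_degree_ne_zero_iff.2 hf0
  have hmon : monomial (v - lex.degree f) (1 : k) ≠ 0 := by simp
  have hsum : lex.degree f + (v - lex.degree f) = v := add_tsub_cancel_of_le hfv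
  refine ⟨g * monomial (v - lex.degree f) 1, ⟨I.mul_mem_right _ ?_, ?_⟩, mul_ne_zero hg0 hmon, ?_⟩
  · exact homogeneousComponent_mem_of_mem hI hfI _
  · have := (homogeneousComponent_mem (lex.degree f).degree f).mul
      (isHomogeneous_monomial (1 : k) (d := v - lex.degree f) rfl)
    rwa [← map_add, hsum] at this
  · classical
    rw [lex.degree_mul hg0 hmon, hg, lex.degree_monomial, if_neg one_ne_zero, hsum]

end HomogeneousPart

theorem MvPolynomial.exists_eval_ne_zero {σ R : Type*} [CommRing R] [IsDomain R] [Infinite R]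
    {p : MvPolynomial σ R} (hp : p ≠ 0) : ∃ x, eval x p ≠ 0 := by
  by_contra! h
  exact hp (MvPolynomial.funext fun x => by simp [h x])

theorem LinearMap.bijective_of_injective_of_surjective {K V W₁ W₂ : Type*} [Field K]
    [AddCommGroup V] [Module K V] [AddCommGroup W₁] [Module K W₁] [AddCommGroup W₂] [Module K W₂]
    [FiniteDimensional K V] [FiniteDimensional K W₂] {f₁ : W₁ →ₗ[K] V} {f₂ : W₂ →ₗ[K] V}
    (h₁ : Function.Injective f₁) (h₂ : Function.Surjective f₂)
    (h : Module.finrank K W₂ ≤ Module.finrank K W₁) : Function.Bijective f₂ := by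
  have hrank : Module.finrank K W₂ = Module.finrank K V :=
    le_antisymm (h.trans (LinearMap.finrank_le_finrank_of_injective h₁))
      (LinearMap.finrank_le_finrank_of_surjective h₂)
  exact ⟨(LinearMap.injective_iff_surjective_of_finrank_eq_finrank hrank).2 h₂, h₂⟩

section InitialExps

variable {n : ℕ} {k : Type*} [Field k]

open Classical in
noncomputable def initialExps (I : Ideal (MvPolynomial (Fin n) k)) (m : ℕ) :
    Finset (Fin n →₀ ℕ) :=
  (Finset.univ.finsuppAntidiag m).filter fun v => monomial v (1 : k) ∈ initialIdeal lexLE I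

theorem mem_initialExps {I : Ideal (MvPolynomial (Fin n) k)} {m : ℕ} {v : Fin n →₀ ℕ} :
    v ∈ initialExps I m ↔ v.degree = m ∧ monomial v (1 : k) ∈ initialIdeal lexLE I := by
  simp [initialExps, Finset.mem_finsuppAntidiag, Finsupp.degree_eq_sum]

theorem injective_coeffsOn_initialExps (I : Ideal (MvPolynomial (Fin n) k)) (m : ℕ) :
    Function.Injective ((coeffsOn (initialExps I m)).domRestrict (homogeneousPart I m)) :=
  injective_coeffsOn lex fun _ hz hz0 => mem_initialExps.2
    ⟨degree_eq_of_mem_support_of_mem_homogeneousSubmodule hz.2 (lex.degree_mem_support hz0),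
      monomial_degree_mem_initialIdeal hz.1 hz0⟩

theorem IsLexsegment.isDegreeUpperSet_initialExps {I : Ideal (MvPolynomial (Fin n) k)}
    (h : IsLexsegment (initialIdeal lexLE I)) (m : ℕ) :
    IsDegreeUpperSet lex m (initialExps I m) := by
  intro v hv w hw hvw
  rw [mem_initialExps] at hv ⊢
  refine ⟨hw, h v hv.2 w ?_ (lexLE_iff.2 hvw)⟩
  rw [degOf_eq_degree, degOf_eq_degree, hw, hv.1]

theorem monomial_mem_initialIdeal_iff_of_bijective {I : Ideal (MvPolynomial (Fin n) k)}
    (hI : I.IsHomogeneous (homogeneousSubmodule (Fin n) k)) {m : ℕ} {L : Finset (Fin n →₀ ℕ)}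
    (hL : IsDegreeUpperSet lex m L)
    (hbij : Function.Bijective ((coeffsOn L).domRestrict (homogeneousPart I m)))
    {e : Fin n →₀ ℕ} (he : e.degree = m) :
    monomial e (1 : k) ∈ initialIdeal lexLE I ↔ e ∈ L := by
  constructor
  · intro hmem
    obtain ⟨p, hp, hp0, rfl⟩ := exists_mem_homogeneousPart_degree_eq hI hmem
    exact degree_mem_of_injective_coeffsOn inf_le_right hL hbij.1 (he ▸ hp) hp0
  · intro heL
    obtain ⟨z, hz, hz0, rfl⟩ :=
      exists_degree_eq_of_surjective_coeffsOn inf_le_right hL hbij.2 heL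
    exact monomial_degree_mem_initialIdeal hz.1 hz0

end InitialExps

section GenericForms

variable {n s : ℕ} {d : Fin s → ℕ} {k : Type*} [Field k]

-- `Idx n s d` indexes the coordinates of `A^N`, i.e. the coefficients of the `s` forms.
variable (k) in
noncomputable def genericForm (d : Fin s → ℕ) (i : Fin s) :
    MvPolynomial (Fin n) (MvPolynomial (Idx n s d) k) :=
  ∑ e ∈ Finset.univ.finsuppAntidiag (d i),
    monomial e (if h : degOf e = d i then X ⟨i, e, h⟩ else 0)

theorem coeff_genericForm (i : Fin s) (e : Fin n →₀ ℕ) :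
    coeff e (genericForm k d i) = if h : degOf e = d i then X ⟨i, e, h⟩ else 0 := by
  classical
  have hmem : e ∈ Finset.univ.finsuppAntidiag (d i) ↔ degOf e = d i := by
    simp [Finset.mem_finsuppAntidiag, degOf]
  simp only [genericForm, coeff_sum, coeff_monomial, Finset.sum_ite_eq', hmem]
  split_ifs <;> rfl

theorem coeffCond_iff {b : Idx n s d → k} {g : Fin s → MvPolynomial (Fin n) k} :
    CoeffCond d b g ↔ ∀ i, g i = map (eval b) (genericForm k d i) := by
  simp only [CoeffCond, MvPolynomial.ext_iff, coeff_map, coeff_genericForm]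
  refine forall_congr' fun i => ⟨fun ⟨h₁, h₂⟩ e => ?_, fun h => ⟨fun e => ?_, fun e he => ?_⟩⟩
  · split_ifs with he
    · exact (h₁ ⟨e, he⟩).trans (eval_X _).symm
    · exact (h₂ e he).trans (map_zero _).symm
  · exact (h e).trans ((congrArg _ (dif_pos e.2)).trans (eval_X _))
  · exact (h e).trans ((congrArg _ (dif_neg he)).trans (map_zero _))

theorem CoeffCond.mem_homogeneousSubmodule {b : Idx n s d → k}
    {g : Fin s → MvPolynomial (Fin n) k} (hb : CoeffCond d b g) (i : Fin s) :
    g i ∈ homogeneousSubmodule (Fin n) k (d i) := fun e he => by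
  have h := not_imp_comm.1 ((hb i).2 e) he
  rwa [degOf_eq_degree, Finsupp.degree_eq_weight_one] at h

theorem span_range_eq_map_span_genericForm {b : Idx n s d → k}
    {g : Fin s → MvPolynomial (Fin n) k} (hb : CoeffCond d b g) :
    Ideal.span (Set.range g) =
      Ideal.map (map (eval b)) (Ideal.span (Set.range (genericForm k d))) := by
  rw [Ideal.map_span, ← Set.range_comp]
  exact congrArg _ (congrArg _ (funext (coeffCond_iff.1 hb)))

theorem exists_ne_zero_forall_surjective_coeffsOn {a : Idx n s d → k}
    {f : Fin s → MvPolynomial (Fin n) k} (ha : CoeffCond d a f) (m : ℕ) :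
    ∃ G : MvPolynomial (Idx n s d) k, G ≠ 0 ∧
      ∀ (b : Idx n s d → k) (g : Fin s → MvPolynomial (Fin n) k), CoeffCond d b g →
        eval b G ≠ 0 →
          Function.Surjective ((coeffsOn (initialExps (Ideal.span (Set.range f)) m)).domRestrict
            (homogeneousPart (Ideal.span (Set.range g)) m)) := by
  classical
  set L := initialExps (Ideal.span (Set.range f)) m
  have hp : ∀ v : L, ∃ p ∈ Ideal.span (Set.range f), p ≠ 0 ∧ lex.degree p = v := fun v => by
    obtain ⟨p, hp, hp0, hpv⟩ := exists_mem_homogeneousPart_degree_eq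
      (isHomogeneous_span_range ha.mem_homogeneousSubmodule) (mem_initialExps.1 v.2).2
    exact ⟨p, hp.1, hp0, hpv⟩
  choose p hpI hp0 hpv using hp
  have hlift : ∀ v, ∃ Q ∈ Ideal.span (Set.range (genericForm k d)), map (eval a) Q = p v :=
    fun v => (Ideal.mem_map_iff_of_surjective _ (map_surjective _ fun c => ⟨C c, eval_C c⟩)).1
      (span_range_eq_map_span_genericForm ha ▸ hpI v)
  choose Q hQ hQp using hlift
  have heval : ∀ b, eval b (Matrix.of fun v w : L => coeff w.1 (Q v)).det =
      (Matrix.of fun v w : L => coeff w.1 (map (eval b) (Q v))).det := fun b => by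
    rw [RingHom.map_det]
    rfl
  refine ⟨(Matrix.of fun v w : L => coeff w.1 (Q v)).det,
    fun h0 => det_coeff_ne_zero_of_degree_eq lex p hp0 hpv ?_, fun b g hb hG => ?_⟩
  · simpa [hQp, h0] using (heval a).symm
  have hIb := isHomogeneous_span_range hb.mem_homogeneousSubmodule
  refine surjective_coeffsOn_of_det_ne_zero
    (fun v => homogeneousComponent m (map (eval b) (Q v)))
    (fun v => ⟨homogeneousComponent_mem_of_mem hIb
      (span_range_eq_map_span_genericForm hb ▸ Ideal.mem_map_of_mem _ (hQ v)) m,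
      homogeneousComponent_mem _ _⟩) ?_
  rw [heval] at hG
  convert hG using 2
  ext v w
  simp [coeff_homogeneousComponent, (mem_initialExps.1 w.2).1]

end GenericForms

theorem stmt19_general {k : Type*} [Field k] [Infinite k] (n s : ℕ) (d : Fin s → ℕ)
    (FU FV : MvPolynomial (Idx n s d) k) (J : Ideal (MvPolynomial (Fin n) k))
    (hFV : FV ≠ 0)
    (hU : ∀ (a : Idx n s d → k) (f : Fin s → MvPolynomial (Fin n) k),
      CoeffCond d a f → MvPolynomial.eval a FU ≠ 0 →
      ∀ (b : Idx n s d → k) (g : Fin s → MvPolynomial (Fin n) k), CoeffCond d b g →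
        ∀ m : ℕ, HF (Ideal.span (Set.range f)) m ≤ HF (Ideal.span (Set.range g)) m)
    (hV : ∀ (a : Idx n s d → k) (f : Fin s → MvPolynomial (Fin n) k),
      CoeffCond d a f → MvPolynomial.eval a FV ≠ 0 →
        initialIdeal lexLE (Ideal.span (Set.range f)) = J)
    (hex : ∃ (a : Idx n s d → k) (f : Fin s → MvPolynomial (Fin n) k),
      CoeffCond d a f ∧ MvPolynomial.eval a FU ≠ 0 ∧
        IsLexsegment (initialIdeal lexLE (Ideal.span (Set.range f)))) :
    IsLexsegment J := by
  obtain ⟨a, f, ha, hFUa, hlex⟩ := hex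
  intro e he e' hdeg hee'
  rw [degOf_eq_degree, degOf_eq_degree] at hdeg
  obtain ⟨G, hG0, hG⟩ := exists_ne_zero_forall_surjective_coeffsOn ha e.degree
  obtain ⟨c, hc⟩ := exists_eval_ne_zero (mul_ne_zero hFV hG0)
  obtain ⟨hFVc, hGc⟩ := mul_ne_zero_iff.1 (by rwa [map_mul] at hc)
  set g := fun i => map (eval c) (genericForm k d i)
  have hcg : CoeffCond d c g := coeffCond_iff.2 fun _ => rfl
  have hbij := LinearMap.bijective_of_injective_of_surjective
    (injective_coeffsOn_initialExps _ _) (hG c g hcg hGc)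
    (finrank_homogeneousPart_le_of_HF_le (hU a f ha hFUa c g hcg _))
  have hI := isHomogeneous_span_range hcg.mem_homogeneousSubmodule
  have hL := hlex.isDegreeUpperSet_initialExps e.degree
  rw [← hV c g hcg hFVc] at he ⊢
  rw [monomial_mem_initialIdeal_iff_of_bijective hI hL hbij rfl] at he
  rw [monomial_mem_initialIdeal_iff_of_bijective hI hL hbij hdeg]
  exact hL e he e' hdeg (lexLE_iff.1 hee')

theorem stmt19 {k : Type*} [Field k] [Infinite k] (n s : ℕ) (d : Fin s → ℕ)
    (FU FV : MvPolynomial (Idx n s d) k) (J : Ideal (MvPolynomial (Fin n) k))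
    (hFU : FU ≠ 0) (hFV : FV ≠ 0)
    (hU : ∀ (a : Idx n s d → k) (f : Fin s → MvPolynomial (Fin n) k),
      CoeffCond d a f → MvPolynomial.eval a FU ≠ 0 →
      ∀ (b : Idx n s d → k) (g : Fin s → MvPolynomial (Fin n) k), CoeffCond d b g →
        ∀ m : ℕ, HF (Ideal.span (Set.range f)) m ≤ HF (Ideal.span (Set.range g)) m)
    (hV : ∀ (a : Idx n s d → k) (f : Fin s → MvPolynomial (Fin n) k),
      CoeffCond d a f → MvPolynomial.eval a FV ≠ 0 →
        initialIdeal lexLE (Ideal.span (Set.range f)) = J)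
    (hex : ∃ (a : Idx n s d → k) (f : Fin s → MvPolynomial (Fin n) k),
      CoeffCond d a f ∧ MvPolynomial.eval a FU ≠ 0 ∧
        IsLexsegment (initialIdeal lexLE (Ideal.span (Set.range f)))) :
    IsLexsegment J :=
  stmt19_general n s d FU FV J hFV hU hV hex
end
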